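/- For every N ≥ 1, the state ψ : Fin 2 × Fin N × Fin (N+1) → ℂ defined by ψ(0, b, castSucc b) = √((N − b)/(N(N+1))) and ψ(1, b, succ b) = √((b + 1)/(N(N+1))) for each b : Fin N (here castSucc b and succ b are the images of b and b+1 in Fin (N+1)), and ψ = 0 on all other triples, is a normalized locally maximally entangled state for dimensions (2, N, N+1). -/

import Mathlib

open scoped ComplexConjugate

noncomputable section

def rho1 {A B C : ℕ} (ψ : Fin A × Fin B × Fin C → ℂ) : Matrix (Fin A) (Fin A) ℂ :=
  Matrix.of fun a a' => ∑ b, ∑ c, ψ (a, b, c) * conj (ψ (a', b, c))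

def rho2 {A B C : ℕ} (ψ : Fin A × Fin B × Fin C → ℂ) : Matrix (Fin B) (Fin B) ℂ :=
  Matrix.of fun b b' => ∑ a, ∑ c, ψ (a, b, c) * conj (ψ (a, b', c))

def rho3 {A B C : ℕ} (ψ : Fin A × Fin B × Fin C → ℂ) : Matrix (Fin C) (Fin C) ℂ :=
  Matrix.of fun c c' => ∑ a, ∑ b, ψ (a, b, c) * conj (ψ (a, b, c'))

def TriNormalized {A B C : ℕ} (ψ : Fin A × Fin B × Fin C → ℂ) : Prop :=
  ∑ x, ‖ψ x‖ ^ 2 = 1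

def TriIsLME {A B C : ℕ} (ψ : Fin A × Fin B × Fin C → ℂ) : Prop :=
  TriNormalized ψ ∧ rho1 ψ = (1 / (A : ℂ)) • 1 ∧
    rho2 ψ = (1 / (B : ℂ)) • 1 ∧ rho3 ψ = (1 / (C : ℂ)) • 1

def TriLMEExists (A B C : ℕ) : Prop := ∃ ψ : Fin A × Fin B × Fin C → ℂ, TriIsLME ψ

/-! The state is supported on the "graph" `c = b + a`, along which `b ↦ c` is injective for fixed
`a` and `a ↦ c` is injective for fixed `b`. For such states all three reduced density matrices are
diagonal, with the marginals of the weights `|ψ(a,b,c)|²` on the diagonal. Local maximal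
entanglement therefore reduces to three marginal conditions on the weights
`w(0,b) = (N - b)/(N(N+1))` and `w(1,b) = (b + 1)/(N(N+1))`: each row sums to `1/2` (Gauss' sum),
each column to `(N+1)/(N(N+1)) = 1/N`, and the fibre over `c` collects `(N - c) + c = N`, i.e.
`1/(N+1)`. -/

open Finset Matrix

lemma Fin.sum_ite_castSucc_eq {M : Type*} [AddCommMonoid M] {n : ℕ} (h : Fin (n + 1) → M)
    (hlast : h (Fin.last n) = 0) (c : Fin (n + 1)) :
    ∑ b : Fin n, (if b.castSucc = c then h b.castSucc else 0) = h c := by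
  simpa [hlast] using (Fin.sum_univ_castSucc fun c' => if c' = c then h c' else 0).symm

lemma Fin.sum_ite_succ_eq {M : Type*} [AddCommMonoid M] {n : ℕ} (h : Fin (n + 1) → M)
    (hzero : h 0 = 0) (c : Fin (n + 1)) :
    ∑ b : Fin n, (if b.succ = c then h b.succ else 0) = h c := by
  simpa [hzero] using (Fin.sum_univ_succ fun c' => if c' = c then h c' else 0).symm

lemma Fin.two_mul_sum_val_add_one {R : Type*} [CommSemiring R] (n : ℕ) :
    2 * ∑ b : Fin n, (((b : ℕ) : R) + 1) = n * (n + 1) := by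
  induction n with
  | zero => simp
  | succ n ih =>
    simp only [Fin.sum_univ_castSucc, Fin.val_castSucc, Fin.val_last, mul_add, ih]
    push_cast
    ring

namespace TriState

variable {A B C : ℕ}

def graphState (f : Fin A → Fin B → Fin C) (g : Fin A → Fin B → ℂ) :
    Fin A × Fin B × Fin C → ℂ :=
  fun x => if x.2.2 = f x.1 x.2.1 then g x.1 x.2.1 else 0

lemma sum_ite_eq_mul_conj_ite_eq {n : ℕ} (x y : Fin n) (u v : ℂ) :
    ∑ c, (if c = x then u else 0) * conj (if c = y then v else 0) =
      if x = y then u * conj v else 0 := by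
  simp only [ite_mul, zero_mul, sum_ite_eq', mem_univ, if_true]
  split_ifs <;> simp_all

section

variable (f : Fin A → Fin B → Fin C) (g : Fin A → Fin B → ℂ)

lemma sum_norm_sq_graphState :
    ∑ x, ‖graphState f g x‖ ^ 2 = ∑ a, ∑ b, ‖g a b‖ ^ 2 := by
  simp [graphState, Fintype.sum_prod_type, apply_ite (‖·‖ ^ 2)]

lemma rho1_graphState (hf : ∀ b, Function.Injective (f · b)) :
    rho1 (graphState f g) = diagonal fun a => ((∑ b, ‖g a b‖ ^ 2 : ℝ) : ℂ) := by
  ext a a'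
  simp only [rho1, graphState, of_apply, sum_ite_eq_mul_conj_ite_eq, (hf _).eq_iff, diagonal_apply]
  split_ifs with h
  · subst h; simp [Complex.mul_conj']
  · simp

lemma rho2_graphState (hf : ∀ a, Function.Injective (f a)) :
    rho2 (graphState f g) = diagonal fun b => ((∑ a, ‖g a b‖ ^ 2 : ℝ) : ℂ) := by
  ext b b'
  simp only [rho2, graphState, of_apply, sum_ite_eq_mul_conj_ite_eq, (hf _).eq_iff, diagonal_apply]
  split_ifs with h
  · subst h; simp [Complex.mul_conj']
  · simp

lemma rho3_graphState :
    rho3 (graphState f g) =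
      diagonal fun c => ((∑ a, ∑ b, if f a b = c then ‖g a b‖ ^ 2 else 0 : ℝ) : ℂ) := by
  ext c c'
  simp only [rho3, graphState, of_apply, diagonal_apply]
  split_ifs with h
  · subst h
    push_cast
    refine sum_congr rfl fun a _ => sum_congr rfl fun b _ => ?_
    split_ifs <;> simp_all [Complex.mul_conj', eq_comm]
  · refine sum_eq_zero fun a _ => sum_eq_zero fun b _ => ?_
    split_ifs <;> simp_all

end

theorem triIsLME_graphState [NeZero A] {f : Fin A → Fin B → Fin C} {g : Fin A → Fin B → ℂ}
    (hf₁ : ∀ b, Function.Injective (f · b)) (hf₂ : ∀ a, Function.Injective (f a))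
    (h₁ : ∀ a, ∑ b, ‖g a b‖ ^ 2 = 1 / (A : ℝ)) (h₂ : ∀ b, ∑ a, ‖g a b‖ ^ 2 = 1 / (B : ℝ))
    (h₃ : ∀ c, ∑ a, ∑ b, (if f a b = c then ‖g a b‖ ^ 2 else 0) = 1 / (C : ℝ)) :
    TriIsLME (graphState f g) := by
  refine ⟨?_, ?_, ?_, ?_⟩
  · simp [TriNormalized, sum_norm_sq_graphState, h₁, NeZero.ne]
  · simp [rho1_graphState f g hf₁, h₁, smul_one_eq_diagonal]
  · simp [rho2_graphState f g hf₂, h₂, smul_one_eq_diagonal]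
  · simp [rho3_graphState, h₃, smul_one_eq_diagonal]

section

variable (N : ℕ)

def lmeShift : Fin 2 → Fin N → Fin (N + 1) := ![Fin.castSucc, Fin.succ]

def lmeWeight : Fin 2 → Fin N → ℝ :=
  ![fun b => (N - (b : ℕ)) / (N * (N + 1)), fun b => ((b : ℕ) + 1) / (N * (N + 1))]

lemma lmeShift_injective_left (b : Fin N) : Function.Injective (lmeShift N · b) := by
  have := (Fin.castSucc_lt_succ (i := b)).ne
  intro a a' h
  fin_cases a <;> fin_cases a' <;> simp_all [lmeShift, eq_comm]

lemma lmeShift_injective_right (a : Fin 2) : Function.Injective (lmeShift N a) := by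
  fin_cases a
  exacts [Fin.castSucc_injective N, Fin.succ_injective N]

lemma lmeWeight_nonneg (a : Fin 2) (b : Fin N) : 0 ≤ lmeWeight N a b := by
  have hb : ((b : ℕ) : ℝ) ≤ N := by exact_mod_cast b.isLt.le
  fin_cases a
  · exact div_nonneg (sub_nonneg.mpr hb) (by positivity)
  · exact div_nonneg (by positivity) (by positivity)

variable {N}

lemma sum_lmeWeight_col (hN : N ≠ 0) (b : Fin N) : ∑ a, lmeWeight N a b = 1 / N := by
  have : (N : ℝ) ≠ 0 := by exact_mod_cast hN
  simp only [Fin.sum_univ_two, lmeWeight, Matrix.cons_val_one, Matrix.cons_val_zero]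
  field_simp
  ring

lemma sum_lmeWeight_row (hN : N ≠ 0) (a : Fin 2) : ∑ b, lmeWeight N a b = 1 / 2 := by
  have hN' : (N : ℝ) ≠ 0 := by exact_mod_cast hN
  have h₁ : ∑ b, lmeWeight N 1 b = 1 / 2 := by
    simp only [lmeWeight, Matrix.cons_val_one, Matrix.cons_val_zero]
    rw [← sum_div, div_eq_iff (by positivity)]
    linarith [Fin.two_mul_sum_val_add_one (R := ℝ) N]
  have h₀₁ : ∑ b, lmeWeight N 0 b + ∑ b, lmeWeight N 1 b = 1 := by
    have hcol := sum_lmeWeight_col hN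
    simp only [Fin.sum_univ_two] at hcol
    simp [← sum_add_distrib, hcol, hN']
  have h₀ : ∑ b, lmeWeight N 0 b = 1 / 2 := by linarith
  fin_cases a
  exacts [h₀, h₁]

lemma sum_lmeWeight_fibre (hN : N ≠ 0) (c : Fin (N + 1)) :
    ∑ a, ∑ b, (if lmeShift N a b = c then lmeWeight N a b else 0) = 1 / (N + 1) := by
  have hN' : (N : ℝ) ≠ 0 := by exact_mod_cast hN
  have h₀ : ∑ b : Fin N, (if b.castSucc = c then ((N : ℝ) - (b : ℕ)) / (N * (N + 1)) else 0) =
      ((N : ℝ) - (c : ℕ)) / (N * (N + 1)) := by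
    simpa using Fin.sum_ite_castSucc_eq (fun c : Fin (N + 1) => ((N : ℝ) - (c : ℕ)) / (N * (N + 1)))
      (by simp) c
  have h₁ : ∑ b : Fin N, (if b.succ = c then (((b : ℕ) : ℝ) + 1) / (N * (N + 1)) else 0) =
      ((c : ℕ) : ℝ) / (N * (N + 1)) := by
    simpa using Fin.sum_ite_succ_eq (fun c : Fin (N + 1) => ((c : ℕ) : ℝ) / (N * (N + 1)))
      (by simp) c
  rw [Fin.sum_univ_two]
  refine (congrArg₂ (· + ·) h₀ h₁).trans ?_
  field_simp
  ring

end

end TriState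

open TriState

/-- the explicit LME state for dimensions (2, N, N+1). -/
theorem lme_two_N_Nsucc (N : ℕ) (hN : 1 ≤ N) :
    TriIsLME (A := 2) (B := N) (C := N + 1)
      (fun x =>
        if x.1 = 0 ∧ x.2.2 = Fin.castSucc x.2.1 then
          ((Real.sqrt ((((N : ℝ) - ((x.2.1 : ℕ) : ℝ))) / ((N : ℝ) * ((N : ℝ) + 1))) : ℝ) : ℂ)
        else if x.1 = 1 ∧ x.2.2 = Fin.succ x.2.1 then
          ((Real.sqrt ((((x.2.1 : ℕ) : ℝ) + 1) / ((N : ℝ) * ((N : ℝ) + 1))) : ℝ) : ℂ)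
        else 0) := by
  have hN₀ : N ≠ 0 := Nat.one_le_iff_ne_zero.mp hN
  have hnorm (a : Fin 2) (b : Fin N) :
      ‖((√(lmeWeight N a b) : ℝ) : ℂ)‖ ^ 2 = lmeWeight N a b := by
    rw [Complex.norm_real, Real.norm_of_nonneg (Real.sqrt_nonneg _),
      Real.sq_sqrt (lmeWeight_nonneg N a b)]
  convert triIsLME_graphState (f := lmeShift N) (g := fun a b => (√(lmeWeight N a b) : ℂ))
    (lmeShift_injective_left N) (lmeShift_injective_right N) ?_ ?_ ?_ using 1
  · funext ⟨a, b, c⟩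
    fin_cases a <;> simp [graphState, lmeShift, lmeWeight]
  · simpa only [hnorm, Nat.cast_ofNat] using sum_lmeWeight_row hN₀
  · simpa only [hnorm] using sum_lmeWeight_col hN₀
  · simpa only [hnorm, Nat.cast_succ] using sum_lmeWeight_fibre hN₀
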